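/- arXiv:1503.05865 — 7 statements merged into one kernel-verified Lean document; each statement's English description precedes it below -/
import Mathlib

section
/- Let N be a (possibly infinite) near polygon in which every line is incident with exactly three points. Then any two points of N at distance 2 from each other have exactly 1, 2, 3 or 5 common neighbours. -/
/-- A partial linear space with a distinguished point set: lines are sets of points,
every line has at least two points and lies inside the point set, and two distinct
points lie on at most one common line. -/
structure Geom (P : Type*) where
  pts : Set P
  lines : Set (Set P)
  lines_pts : ∀ L ∈ lines, L ⊆ pts
  two_pts : ∀ L ∈ lines, ∃ x ∈ L, ∃ y ∈ L, x ≠ y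
  unique_line : ∀ L₁ ∈ lines, ∀ L₂ ∈ lines, ∀ x y : P,
    x ≠ y → x ∈ L₁ → y ∈ L₁ → x ∈ L₂ → y ∈ L₂ → L₁ = L₂

variable {P : Type*}

/-- The collinearity graph of a point-line geometry. -/
def Geom.graph (G : Geom P) : SimpleGraph P where
  Adj x y := x ≠ y ∧ ∃ L ∈ G.lines, x ∈ L ∧ y ∈ L
  symm := by
    constructor
    rintro x y ⟨hxy, L, hL, hx, hy⟩
    exact ⟨hxy.symm, L, hL, hy, hx⟩
  loopless := by
    constructor
    rintro x ⟨h, -⟩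
    exact h rfl

/-- The distance between two points, measured in the collinearity graph. -/
noncomputable def Geom.dist (G : Geom P) (x y : P) : ℕ := G.graph.dist x y

/-- The minimum distance from a point to a (nonempty) set of points. -/
noncomputable def Geom.setDist (G : Geom P) (x : P) (X : Set P) : ℕ :=
  sInf (G.dist x '' X)

/-- A near `2d`-gon: the collinearity graph restricted to the points is connected of
diameter `d`, and every point-line pair admits a unique nearest point on the line. -/
def Geom.IsNearPolygon (G : Geom P) (d : ℕ) : Prop :=
  (∀ x ∈ G.pts, ∀ y ∈ G.pts, G.graph.Reachable x y) ∧
  (∀ x ∈ G.pts, ∀ y ∈ G.pts, G.dist x y ≤ d) ∧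
  (∃ x ∈ G.pts, ∃ y ∈ G.pts, G.dist x y = d) ∧
  (∀ x ∈ G.pts, ∀ L ∈ G.lines, ∃! y, y ∈ L ∧ ∀ z ∈ L, G.dist x y ≤ G.dist x z)

/-- A generalized hexagon: a near hexagon in which every point is on at least two
lines and any two points at distance 2 have exactly one common neighbour. -/
def Geom.IsGenHexagon (G : Geom P) : Prop :=
  G.IsNearPolygon 3 ∧
  (∀ x ∈ G.pts, ∃ L₁ ∈ G.lines, ∃ L₂ ∈ G.lines, L₁ ≠ L₂ ∧ x ∈ L₁ ∧ x ∈ L₂) ∧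
  (∀ x ∈ G.pts, ∀ y ∈ G.pts, G.dist x y = 2 →
    ∃! z, G.graph.Adj x z ∧ G.graph.Adj z y)

/-- A geometry has order `(s,t)` if every line has exactly `s+1` points and every
point is on exactly `t+1` lines. -/
def Geom.HasOrder (G : Geom P) (s t : ℕ) : Prop :=
  (∀ L ∈ G.lines, L.ncard = s + 1) ∧
  (∀ x ∈ G.pts, {L | L ∈ G.lines ∧ x ∈ L}.ncard = t + 1)

/-- `H` is a (full) subgeometry of `G`: its points are points of `G` and its lines
are lines of `G` (lines being sets of points, fullness is automatic). -/
def Geom.IsSubgeom (H G : Geom P) : Prop := H.pts ⊆ G.pts ∧ H.lines ⊆ G.lines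

/-- `H` is isometrically embedded in `G`: distances between points of `H` agree. -/
def Geom.IsIsometric (H G : Geom P) : Prop :=
  ∀ x ∈ H.pts, ∀ y ∈ H.pts, H.dist x y = G.dist x y

/-- An ovoid: a set of points meeting every line in exactly one point. -/
def Geom.IsOvoid (G : Geom P) (O : Set P) : Prop :=
  O ⊆ G.pts ∧ ∀ L ∈ G.lines, ∃! x, x ∈ L ∩ O

/-- A valuation of a geometry: a nonnegative integer-valued function attaining the
value 0, such that every line has a unique point of minimal value and all other
points of the line have that value plus one. -/
def Geom.IsValuation (G : Geom P) (f : P → ℤ) : Prop :=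
  (∀ x ∈ G.pts, 0 ≤ f x) ∧ (∃ x ∈ G.pts, f x = 0) ∧
  (∀ L ∈ G.lines, ∃ x ∈ L, ∀ y ∈ L, y ≠ x → f y = f x + 1)


/-!
In a near polygon every point `p` has a unique nearest point `q` on each line, and every other
point of the line lies at distance `d(p, q) + 1`. On a line with three points, the distances
from `p` to two of the points therefore determine the distance to the third. In particular,
two common neighbours of points `x, y` at distance 2 are at distance 2 from each other.

Given four common neighbours `z₁, …, z₄` of `x` and `y`, chasing third points of lines gives a
point `e` collinear with each of `z₁, z₂, z₃` that lies at distance 2 from `x`, `y` and every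
other common neighbour. A second chase, starting from the line `x z₄`, shows that besides `z₄`
exactly one common neighbour `r` lies at distance 2 from `e`. So the common neighbours are
`z₁, …, z₄, r`.
-/

lemma Set.ncard_mem_of_forall_four_ncard_eq_five {α : Type*} {S : Set α} (hne : S.Nonempty)
    (h5 : ∀ a ∈ S, ∀ b ∈ S, ∀ c ∈ S, ∀ e ∈ S,
      a ≠ b → a ≠ c → a ≠ e → b ≠ c → b ≠ e → c ≠ e → S.ncard = 5) :
    S.ncard ∈ ({1, 2, 3, 5} : Set ℕ) := by
  by_cases hsmall : S.Finite ∧ S.ncard ≤ 3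
  · have := (Set.ncard_pos hsmall.1).mpr hne
    simp only [Set.mem_insert_iff, Set.mem_singleton_iff]
    omega
  obtain ⟨T, hTS, hT, hT4⟩ : ∃ T ⊆ S, T.Finite ∧ 3 < T.ncard := by
    rcases S.finite_or_infinite with hS | hS
    · exact ⟨S, subset_rfl, hS, Nat.lt_of_not_le fun h => hsmall ⟨hS, h⟩⟩
    · obtain ⟨T, hTS, hT, hT4⟩ := hS.exists_subset_ncard_eq 4
      exact ⟨T, hTS, hT, by omega⟩
  obtain ⟨a, ha, b, hb, c, hc, e, he, hab, hac, hae, hbc, hbe, hce⟩ :=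
    (Set.three_lt_ncard hT).mp hT4
  rw [h5 a (hTS ha) b (hTS hb) c (hTS hc) e (hTS he) hab hac hae hbc hbe hce]
  simp

lemma SimpleGraph.commonNeighbors_nonempty_of_dist_eq_two {V : Type*} {G : SimpleGraph V}
    {u v : V} (h : G.dist u v = 2) : (G.commonNeighbors u v).Nonempty :=
  (edist_eq_two_iff.mp ((ENat.toNat_eq_iff two_ne_zero).mp h)).2.2

namespace Geom

open SimpleGraph

variable {N : Geom P} {d : ℕ} {L : Set P} {p u v w x y : P}

lemma mem_pts_of_adj (h : N.graph.Adj u v) : u ∈ N.pts := by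
  obtain ⟨-, L, hL, huL, -⟩ := h
  exact N.lines_pts L hL huL

lemma mem_pts_of_mem_commonNeighbors (h : u ∈ N.graph.commonNeighbors x y) : u ∈ N.pts :=
  mem_pts_of_adj ((N.graph.mem_commonNeighbors.mp h).1.symm)

lemma IsNearPolygon.exists_dist_eq_add_one (hN : N.IsNearPolygon d) (hp : p ∈ N.pts)
    (hL : L ∈ N.lines) :
    ∃ q ∈ L, ∀ z ∈ L, z ≠ q → N.graph.dist p z = N.graph.dist p q + 1 := by
  obtain ⟨q, ⟨hqL, hq⟩, huniq⟩ := hN.2.2.2 p hp L hL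
  change ∀ c ∈ L, N.graph.dist p q ≤ N.graph.dist p c at hq
  refine ⟨q, hqL, fun z hzL hzq => ?_⟩
  have hqz : N.graph.Adj q z := ⟨hzq.symm, L, hL, hqL, hzL⟩
  have hle : N.graph.dist p z ≤ N.graph.dist p q + N.graph.dist q z :=
    hqz.reachable.dist_triangle_right p
  have hne : N.graph.dist p z ≠ N.graph.dist p q :=
    fun h => hzq <| huniq z
      ⟨hzL, fun c hc => show N.graph.dist p z ≤ N.graph.dist p c from h ▸ hq c hc⟩
  rw [dist_eq_one_iff_adj.mpr hqz] at hle
  have := hq z hzL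
  omega

structure IsThreePointLine (N : Geom P) (u v w : P) : Prop where
  mem_lines : ({u, v, w} : Set P) ∈ N.lines
  ne₁₂ : u ≠ v
  ne₁₃ : u ≠ w
  ne₂₃ : v ≠ w

lemma exists_isThreePointLine (h3 : ∀ L ∈ N.lines, L.ncard = 3) (huv : N.graph.Adj u v) :
    ∃ w, N.IsThreePointLine u v w := by
  obtain ⟨hne, L, hL, huL, hvL⟩ := huv
  have hsub : ({u, v} : Set P) ⊆ L := Set.pair_subset huL hvL
  have hfin : L.Finite := Set.finite_of_ncard_pos (by rw [h3 L hL]; norm_num)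
  obtain ⟨w, hw⟩ : ∃ w, L \ {u, v} = {w} := by
    rw [← Set.ncard_eq_one]
    have := Set.ncard_sdiff_add_ncard_of_subset hsub hfin
    rw [h3 L hL, Set.ncard_pair hne] at this
    omega
  have hwL : w ∈ L \ {u, v} := hw ▸ rfl
  simp only [Set.mem_sdiff, Set.mem_insert_iff, Set.mem_singleton_iff, not_or] at hwL
  refine ⟨w, ?_, hne, Ne.symm hwL.2.1, Ne.symm hwL.2.2⟩
  convert hL using 1
  rw [← Set.union_sdiff_cancel hsub, hw]
  ext z
  simp only [Set.mem_insert_iff, Set.mem_singleton_iff, Set.mem_union, or_assoc]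

namespace IsThreePointLine

lemma swap₁₂ (h : N.IsThreePointLine u v w) : N.IsThreePointLine v u w :=
  ⟨Set.insert_comm u v {w} ▸ h.mem_lines, h.ne₁₂.symm, h.ne₂₃, h.ne₁₃⟩

lemma adj₁₃ (h : N.IsThreePointLine u v w) : N.graph.Adj u w :=
  ⟨h.ne₁₃, _, h.mem_lines, by simp, by simp⟩

lemma adj₂₃ (h : N.IsThreePointLine u v w) : N.graph.Adj v w :=
  ⟨h.ne₂₃, _, h.mem_lines, by simp, by simp⟩

lemma dist_add_one_of_dist_eq (hN : N.IsNearPolygon d) (hp : p ∈ N.pts)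
    (h : N.IsThreePointLine u v w) (huv : N.graph.dist p u = N.graph.dist p v) :
    N.graph.dist p w + 1 = N.graph.dist p u := by
  obtain ⟨q, hq, hnear⟩ := hN.exists_dist_eq_add_one hp h.mem_lines
  rcases hq with rfl | rfl | rfl
  · have := hnear v (by simp) h.ne₁₂.symm
    omega
  · have := hnear u (by simp) h.ne₁₂
    omega
  · exact (hnear u (by simp) h.ne₁₃).symm

lemma dist_eq_of_dist_lt (hN : N.IsNearPolygon d) (hp : p ∈ N.pts)
    (h : N.IsThreePointLine u v w) (huv : N.graph.dist p u < N.graph.dist p v) :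
    N.graph.dist p w = N.graph.dist p v := by
  obtain ⟨q, hq, hnear⟩ := hN.exists_dist_eq_add_one hp h.mem_lines
  rcases hq with rfl | rfl | rfl
  · rw [hnear v (by simp) h.ne₁₂.symm, hnear w (by simp) h.ne₁₃.symm]
  · have := hnear u (by simp) h.ne₁₂
    omega
  · have := hnear u (by simp) h.ne₁₃
    have := hnear v (by simp) h.ne₂₃
    omega

lemma adj_of_dist_eq_two (hN : N.IsNearPolygon d) (hp : p ∈ N.pts)
    (h : N.IsThreePointLine u v w) (hu : N.graph.dist p u = 2) (hv : N.graph.dist p v = 2) :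
    N.graph.Adj p w := by
  have := h.dist_add_one_of_dist_eq hN hp (hu.trans hv.symm)
  exact dist_eq_one_iff_adj.mp (by omega)

lemma dist_eq_two_of_adj (hN : N.IsNearPolygon d) (h : N.IsThreePointLine u v w)
    (hu : N.graph.Adj p u) (hv : N.graph.dist p v = 2) : N.graph.dist p w = 2 := by
  have huv : N.graph.dist p u < N.graph.dist p v := by
    rw [dist_eq_one_iff_adj.mpr hu, hv]
    norm_num
  rw [h.dist_eq_of_dist_lt hN (mem_pts_of_adj hu) huv, hv]

lemma eq_of_adj_of_adj (hN : N.IsNearPolygon d) (h : N.IsThreePointLine u v w)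
    (hu : N.graph.Adj p u) (hv : N.graph.Adj p v) : p = w := by
  have := h.dist_add_one_of_dist_eq hN (mem_pts_of_adj hu)
    (by rw [dist_eq_one_iff_adj.mpr hu, dist_eq_one_iff_adj.mpr hv])
  rw [dist_eq_one_iff_adj.mpr hu] at this
  exact ((Adj.reachable hv).trans (Adj.reachable h.adj₂₃)).dist_eq_zero_iff.mp (by omega)

end IsThreePointLine

lemma dist_eq_two_of_mem_commonNeighbors (hN : N.IsNearPolygon d)
    (h3 : ∀ L ∈ N.lines, L.ncard = 3) (hxy : x ≠ y) {a b : P}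
    (ha : a ∈ N.graph.commonNeighbors x y) (hb : b ∈ N.graph.commonNeighbors x y)
    (hab : a ≠ b) : N.graph.dist a b = 2 := by
  obtain ⟨hxa, hya⟩ := N.graph.mem_commonNeighbors.mp ha
  obtain ⟨hxb, hyb⟩ := N.graph.mem_commonNeighbors.mp hb
  have hnadj : N.graph.dist a b ≠ 1 := fun h => by
    obtain ⟨w, hw⟩ := exists_isThreePointLine h3 (dist_eq_one_iff_adj.mp h)
    exact hxy ((hw.eq_of_adj_of_adj hN hxa hxb).trans (hw.eq_of_adj_of_adj hN hya hyb).symm)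
  have hle : N.graph.dist a b ≤ N.graph.dist a x + N.graph.dist x b :=
    (Adj.reachable hxb).dist_triangle_right a
  have hpos := ((Adj.reachable hxa.symm).trans (Adj.reachable hxb)).pos_dist_of_ne hab
  rw [dist_eq_one_iff_adj.mpr hxa.symm, dist_eq_one_iff_adj.mpr hxb] at hle
  omega

lemma exists_adj_of_mem_commonNeighbors (hN : N.IsNearPolygon d)
    (h3 : ∀ L ∈ N.lines, L.ncard = 3) (hxy : N.graph.dist x y = 2) {z₁ z₂ : P}
    (h₁ : z₁ ∈ N.graph.commonNeighbors x y) (h₂ : z₂ ∈ N.graph.commonNeighbors x y)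
    (h₁₂ : z₁ ≠ z₂) :
    ∃ c, N.graph.dist x c = 2 ∧ N.graph.dist y c = 2 ∧ N.graph.dist z₁ c = 2 ∧
      N.graph.dist z₂ c = 2 ∧
      ∀ z ∈ N.graph.commonNeighbors x y, z ≠ z₁ → z ≠ z₂ → N.graph.Adj z c := by
  have hxy' : x ≠ y := by rintro rfl; simp at hxy
  have hdist {a b : P} := dist_eq_two_of_mem_commonNeighbors (a := a) (b := b) hN h3 hxy'
  obtain ⟨hxz₁, hyz₁⟩ := N.graph.mem_commonNeighbors.mp h₁
  obtain ⟨hxz₂, hyz₂⟩ := N.graph.mem_commonNeighbors.mp h₂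
  obtain ⟨a, ha⟩ := exists_isThreePointLine h3 hxz₁
  obtain ⟨b, hb⟩ := exists_isThreePointLine h3 hyz₂
  have hya : N.graph.dist y a = 2 := ha.swap₁₂.dist_eq_two_of_adj hN hyz₁ (by rwa [dist_comm])
  have hz₂a : N.graph.dist z₂ a = 2 :=
    ha.dist_eq_two_of_adj hN hxz₂.symm (hdist h₂ h₁ h₁₂.symm)
  have hxb : N.graph.dist x b = 2 := hb.swap₁₂.dist_eq_two_of_adj hN hxz₂ hxy
  have hz₁b : N.graph.dist z₁ b = 2 := hb.dist_eq_two_of_adj hN hyz₁.symm (hdist h₁ h₂ h₁₂)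
  have hab : N.graph.Adj a b := hb.adj_of_dist_eq_two hN (mem_pts_of_adj ha.adj₂₃.symm)
    (by rwa [dist_comm]) (by rwa [dist_comm])
  obtain ⟨c, hc⟩ := exists_isThreePointLine h3 hab
  refine ⟨c, hc.dist_eq_two_of_adj hN ha.adj₁₃ hxb,
    hc.swap₁₂.dist_eq_two_of_adj hN hb.adj₁₃ hya, hc.dist_eq_two_of_adj hN ha.adj₂₃ hz₁b,
    hc.swap₁₂.dist_eq_two_of_adj hN hb.adj₂₃ hz₂a, fun z hz hzz₁ hzz₂ => ?_⟩
  obtain ⟨hxz, hyz⟩ := N.graph.mem_commonNeighbors.mp hz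
  exact hc.adj_of_dist_eq_two hN (mem_pts_of_adj hxz.symm)
    (ha.dist_eq_two_of_adj hN hxz.symm (hdist hz h₁ hzz₁))
    (hb.dist_eq_two_of_adj hN hyz.symm (hdist hz h₂ hzz₂))

lemma exists_adj_of_three_mem_commonNeighbors (hN : N.IsNearPolygon d)
    (h3 : ∀ L ∈ N.lines, L.ncard = 3) (hxy : N.graph.dist x y = 2) {z₁ z₂ z₃ : P}
    (h₁ : z₁ ∈ N.graph.commonNeighbors x y) (h₂ : z₂ ∈ N.graph.commonNeighbors x y)
    (h₃ : z₃ ∈ N.graph.commonNeighbors x y) (h₁₂ : z₁ ≠ z₂) (h₁₃ : z₁ ≠ z₃) (h₂₃ : z₂ ≠ z₃) :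
    ∃ e, N.graph.Adj z₁ e ∧ N.graph.Adj z₂ e ∧ N.graph.Adj z₃ e ∧
      N.graph.dist x e = 2 ∧ N.graph.dist y e = 2 ∧
      ∀ z ∈ N.graph.commonNeighbors x y, z ≠ z₁ → z ≠ z₂ → z ≠ z₃ →
        N.graph.dist z e = 2 := by
  have hxy' : x ≠ y := by rintro rfl; simp at hxy
  have hdist {a b : P} := dist_eq_two_of_mem_commonNeighbors (a := a) (b := b) hN h3 hxy'
  obtain ⟨c, hxc, hyc, hz₁c, hz₂c, hadj⟩ :=
    exists_adj_of_mem_commonNeighbors hN h3 hxy h₁ h₂ h₁₂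
  obtain ⟨e, he⟩ := exists_isThreePointLine h3 (hadj z₃ h₃ h₁₃.symm h₂₃.symm)
  obtain ⟨hxz₃, hyz₃⟩ := N.graph.mem_commonNeighbors.mp h₃
  refine ⟨e, he.adj_of_dist_eq_two hN (mem_pts_of_mem_commonNeighbors h₁) (hdist h₁ h₃ h₁₃) hz₁c,
    he.adj_of_dist_eq_two hN (mem_pts_of_mem_commonNeighbors h₂) (hdist h₂ h₃ h₂₃) hz₂c,
    he.adj₁₃, he.dist_eq_two_of_adj hN hxz₃ hxc, he.dist_eq_two_of_adj hN hyz₃ hyc,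
    fun z hz hzz₁ hzz₂ hzz₃ => ?_⟩
  exact he.swap₁₂.dist_eq_two_of_adj hN (hadj z hz hzz₁ hzz₂) (hdist hz h₃ hzz₃)

lemma exists_other_mem_commonNeighbors_dist_eq_two (hN : N.IsNearPolygon d)
    (h3 : ∀ L ∈ N.lines, L.ncard = 3) (hxy : N.graph.dist x y = 2) {z e : P}
    (hz : z ∈ N.graph.commonNeighbors x y) (he : e ∈ N.pts) (hxe : N.graph.dist x e = 2)
    (hye : N.graph.dist y e = 2) (hze : N.graph.dist z e = 2) :
    ∃ r ∈ N.graph.commonNeighbors x y, r ≠ z ∧ N.graph.dist r e = 2 ∧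
      ∀ w ∈ N.graph.commonNeighbors x y, w ≠ z → N.graph.dist w e = 2 → w = r := by
  obtain ⟨hxz, hyz⟩ := N.graph.mem_commonNeighbors.mp hz
  obtain ⟨a, ha⟩ := exists_isThreePointLine h3 hxz
  have hea : N.graph.Adj e a :=
    ha.adj_of_dist_eq_two hN he (by rwa [dist_comm]) (by rwa [dist_comm])
  obtain ⟨q, hq⟩ := exists_isThreePointLine h3 hea
  have hya : N.graph.dist y a = 2 := ha.swap₁₂.dist_eq_two_of_adj hN hyz (by rwa [dist_comm])
  obtain ⟨r, hr⟩ := exists_isThreePointLine h3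
    (hq.adj_of_dist_eq_two hN (mem_pts_of_adj hyz) hye hya)
  have hxq : N.graph.dist x q = 2 := hq.swap₁₂.dist_eq_two_of_adj hN ha.adj₁₃ hxe
  have hzq : N.graph.dist z q = 2 := hq.swap₁₂.dist_eq_two_of_adj hN ha.adj₂₃ hze
  have hxr : N.graph.Adj x r := hr.adj_of_dist_eq_two hN (mem_pts_of_adj hxz) hxy hxq
  refine ⟨r, N.graph.mem_commonNeighbors.mpr ⟨hxr, hr.adj₁₃⟩, ?_, ?_, ?_⟩
  · rintro rfl
    simp [dist_eq_one_iff_adj.mpr hr.adj₂₃.symm] at hzq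
  · rw [dist_comm]
    exact hr.swap₁₂.dist_eq_two_of_adj hN hq.adj₁₃ (by rwa [dist_comm])
  · intro w hw hwz hwe
    obtain ⟨hxw, hyw⟩ := N.graph.mem_commonNeighbors.mp hw
    have hwa : N.graph.dist w a = 2 := ha.dist_eq_two_of_adj hN hxw.symm
      (dist_eq_two_of_mem_commonNeighbors hN h3 (by rintro rfl; simp at hxy) hw hz hwz)
    exact hr.eq_of_adj_of_adj hN hyw.symm
      (hq.adj_of_dist_eq_two hN (mem_pts_of_mem_commonNeighbors hw) hwe hwa)

lemma ncard_commonNeighbors_eq_five (hN : N.IsNearPolygon d)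
    (h3 : ∀ L ∈ N.lines, L.ncard = 3) (hxy : N.graph.dist x y = 2) {z₁ z₂ z₃ z₄ : P}
    (h₁ : z₁ ∈ N.graph.commonNeighbors x y) (h₂ : z₂ ∈ N.graph.commonNeighbors x y)
    (h₃ : z₃ ∈ N.graph.commonNeighbors x y) (h₄ : z₄ ∈ N.graph.commonNeighbors x y)
    (h₁₂ : z₁ ≠ z₂) (h₁₃ : z₁ ≠ z₃) (h₁₄ : z₁ ≠ z₄) (h₂₃ : z₂ ≠ z₃) (h₂₄ : z₂ ≠ z₄)
    (h₃₄ : z₃ ≠ z₄) :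
    (N.graph.commonNeighbors x y).ncard = 5 := by
  obtain ⟨e, hz₁e, hz₂e, hz₃e, hxe, hye, hfar⟩ :=
    exists_adj_of_three_mem_commonNeighbors hN h3 hxy h₁ h₂ h₃ h₁₂ h₁₃ h₂₃
  obtain ⟨r, hr, hr₄, hre, huniq⟩ :=
    exists_other_mem_commonNeighbors_dist_eq_two hN h3 hxy h₄ (mem_pts_of_adj hz₁e.symm)
      hxe hye (hfar z₄ h₄ h₁₄.symm h₂₄.symm h₃₄.symm)
  have hne {z : P} (hze : N.graph.Adj z e) : r ≠ z := by
    rintro rfl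
    simp [dist_eq_one_iff_adj.mpr hze] at hre
  have hcn : N.graph.commonNeighbors x y = {z₁, z₂, z₃, z₄, r} := by
    ext z
    simp only [Set.mem_insert_iff, Set.mem_singleton_iff]
    refine ⟨fun hz => ?_, by rintro (rfl | rfl | rfl | rfl | rfl) <;> assumption⟩
    by_contra! hz'
    exact hz'.2.2.2.2 (huniq z hz hz'.2.2.2.1 (hfar z hz hz'.1 hz'.2.1 hz'.2.2.1))
  rw [hcn, Set.ncard_insert_of_notMem (by simp [h₁₂, h₁₃, h₁₄, (hne hz₁e).symm]),
    Set.ncard_insert_of_notMem (by simp [h₂₃, h₂₄, (hne hz₂e).symm]),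
    Set.ncard_insert_of_notMem (by simp [h₃₄, (hne hz₃e).symm]),
    Set.ncard_pair hr₄.symm]

end Geom

theorem statement_3_general {P : Type*} (N : Geom P) (d : ℕ)
    (hN : N.IsNearPolygon d)
    (h3 : ∀ L ∈ N.lines, L.ncard = 3)
    (x y : P) (hxy : N.dist x y = 2) :
    {z | N.graph.Adj x z ∧ N.graph.Adj z y}.ncard ∈ ({1, 2, 3, 5} : Set ℕ) := by
  have hcn : {z | N.graph.Adj x z ∧ N.graph.Adj z y} = N.graph.commonNeighbors x y := by
    ext z
    simp [SimpleGraph.mem_commonNeighbors, SimpleGraph.adj_comm]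
  rw [hcn]
  exact Set.ncard_mem_of_forall_four_ncard_eq_five
    (SimpleGraph.commonNeighbors_nonempty_of_dist_eq_two hxy)
    fun a ha b hb c hc e he => Geom.ncard_commonNeighbors_eq_five hN h3 hxy ha hb hc he

theorem statement_3 {P : Type*} (N : Geom P) (d : ℕ)
    (hN : N.IsNearPolygon d)
    (h3 : ∀ L ∈ N.lines, L.ncard = 3)
    (x y : P) (hx : x ∈ N.pts) (hy : y ∈ N.pts) (hxy : N.dist x y = 2) :
    {z | N.graph.Adj x z ∧ N.graph.Adj z y}.ncard ∈ ({1, 2, 3, 5} : Set ℕ) :=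
  statement_3_general N d hN h3 x y hxy
end

section
/- Let N be a near polygon with point set P that is isometrically embedded as a full subgeometry in a near polygon N'. Then for every point x of N', the function f_x defined on P by f_x(y) = d(x,y) − d(x,P), where distances are computed in N' and d(x,P) is the minimum distance from x to a point of P, is a valuation of N. -/
variable {P : Type*}

namespace Geom

lemma setDist_le (G : Geom P) {x y : P} {X : Set P} (hy : y ∈ X) :
    G.setDist x X ≤ G.dist x y :=
  Nat.sInf_le (Set.mem_image_of_mem _ hy)

lemma exists_dist_eq_setDist (G : Geom P) (x : P) {X : Set P} (hX : X.Nonempty) :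
    ∃ y ∈ X, G.dist x y = G.setDist x X :=
  Nat.sInf_mem (hX.image (G.dist x))

lemma IsNearPolygon.pts_nonempty {G : Geom P} {d : ℕ} (hG : G.IsNearPolygon d) :
    G.pts.Nonempty :=
  let ⟨x, hx, _⟩ := hG.2.2.1
  ⟨x, hx⟩

lemma IsNearPolygon.exists_dist_eq_add_one_s4 {G : Geom P} {d : ℕ} (hG : G.IsNearPolygon d)
    {x : P} (hx : x ∈ G.pts) {L : Set P} (hL : L ∈ G.lines) :
    ∃ y ∈ L, ∀ z ∈ L, z ≠ y → G.dist x z = G.dist x y + 1 := by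
  obtain ⟨y, ⟨hyL, hy_min⟩, hy_unique⟩ := hG.2.2.2 x hx L hL
  refine ⟨y, hyL, fun z hzL hzy => ?_⟩
  have hadj : G.graph.Adj y z := ⟨hzy.symm, L, hL, hyL, hzL⟩
  have hle : G.dist x y ≤ G.dist x z := hy_min z hzL
  have hne : G.dist x z ≠ G.dist x y := fun heq =>
    hzy (hy_unique z ⟨hzL, fun w hw => heq ▸ hy_min w hw⟩)
  unfold Geom.dist at hle hne ⊢
  rcases hadj.diff_dist_adj (u := x) with h | h | h <;> omega

end Geom

theorem statement_4_general {P : Type*} (N N' : Geom P) (d d' : ℕ)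
    (hN : N.IsNearPolygon d) (hN' : N'.IsNearPolygon d')
    (hsub : N.IsSubgeom N')
    (x : P) (hx : x ∈ N'.pts) :
    N.IsValuation (fun y => (N'.dist x y : ℤ) - (N'.setDist x N.pts : ℤ)) := by
  refine ⟨fun y hy => ?_, ?_, fun L hL => ?_⟩
  · exact sub_nonneg.2 (Int.ofNat_le.2 (N'.setDist_le hy))
  · obtain ⟨y, hy, hdist⟩ := N'.exists_dist_eq_setDist x hN.pts_nonempty
    exact ⟨y, hy, by simp only [hdist, sub_self]⟩
  · obtain ⟨y, hyL, hfar⟩ := hN'.exists_dist_eq_add_one_s4 hx (hsub.2 hL)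
    refine ⟨y, hyL, fun z hzL hzy => ?_⟩
    simp only [hfar z hzL hzy]
    push_cast
    ring

theorem statement_4 {P : Type*} (N N' : Geom P) (d d' : ℕ)
    (hN : N.IsNearPolygon d) (hN' : N'.IsNearPolygon d')
    (hsub : N.IsSubgeom N') (hiso : N.IsIsometric N')
    (x : P) (hx : x ∈ N'.pts) :
    N.IsValuation (fun y => (N'.dist x y : ℤ) - (N'.setDist x N.pts : ℤ)) :=
  statement_4_general N N' d d' hN hN' hsub x hx
end

section
/- Let N be a near polygon with point set P that is isometrically embedded as a full subgeometry in a near polygon N', and for a point x of N' let f_x be the valuation of N defined by f_x(y) = d(x,y) − d(x,P). Then for any two distinct collinear points x1 and x2 of N', the valuations f_{x1} and f_{x2} are neighbouring, i.e. there exists ε ∈ {−1,0,1} such that |f_{x1}(y) − f_{x2}(y) + ε| ≤ 1 for every point y of N. -/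
variable {P : Type*}

/-!
Adjacent points `x₁, x₂` satisfy `|d(x₁,z) - d(x₂,z)| ≤ 1` for every point `z`, and hence also
`|d(x₁,X) - d(x₂,X)| ≤ 1` for every set `X`. Taking `ε = d(x₁,P) - d(x₂,P)`, the quantity
`f_{x₁}(y) - f_{x₂}(y) + ε` is just `d(x₁,y) - d(x₂,y)`.
-/

lemma SimpleGraph.Adj.dist_le_dist_add_one {V : Type*} {G : SimpleGraph V} {a b : V}
    (hab : G.Adj a b) (y : V) : G.dist a y ≤ G.dist b y + 1 := by
  have h := hab.reachable.dist_triangle_left y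
  rw [SimpleGraph.dist_eq_one_iff_adj.mpr hab] at h
  omega

lemma Geom.setDist_le_setDist_add_one {P : Type*} (G : Geom P) {a b : P}
    (hab : G.graph.Adj a b) (X : Set P) : G.setDist a X ≤ G.setDist b X + 1 := by
  rcases X.eq_empty_or_nonempty with rfl | hX
  · simp [Geom.setDist]
  obtain ⟨p, hp, hbp⟩ := Nat.sInf_mem (hX.image (G.dist b))
  calc G.setDist a X
      ≤ G.dist a p := Nat.sInf_le ⟨p, hp, rfl⟩
    _ ≤ G.dist b p + 1 := hab.dist_le_dist_add_one p
    _ = G.setDist b X + 1 := by rw [Geom.setDist, hbp]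

theorem statement_5_general {P : Type*} (N N' : Geom P)
    (x₁ x₂ : P) (hadj : N'.graph.Adj x₁ x₂) :
    ∃ ε : ℤ, ε ∈ ({-1, 0, 1} : Set ℤ) ∧ ∀ y ∈ N.pts,
      |((N'.dist x₁ y : ℤ) - (N'.setDist x₁ N.pts : ℤ)) -
        ((N'.dist x₂ y : ℤ) - (N'.setDist x₂ N.pts : ℤ)) + ε| ≤ 1 := by
  have hs₁₂ := N'.setDist_le_setDist_add_one hadj N.pts
  have hs₂₁ := N'.setDist_le_setDist_add_one hadj.symm N.pts
  refine ⟨N'.setDist x₁ N.pts - N'.setDist x₂ N.pts, ?_, fun y _ => ?_⟩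
  · simp only [Set.mem_insert_iff, Set.mem_singleton_iff]
    omega
  · have hd₁₂ : N'.dist x₁ y ≤ N'.dist x₂ y + 1 := hadj.dist_le_dist_add_one y
    have hd₂₁ : N'.dist x₂ y ≤ N'.dist x₁ y + 1 := hadj.symm.dist_le_dist_add_one y
    rw [abs_le]
    omega

theorem statement_5 {P : Type*} (N N' : Geom P) (d d' : ℕ)
    (hN : N.IsNearPolygon d) (hN' : N'.IsNearPolygon d')
    (hsub : N.IsSubgeom N') (hiso : N.IsIsometric N')
    (x₁ x₂ : P) (hx₁ : x₁ ∈ N'.pts) (hx₂ : x₂ ∈ N'.pts)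
    (hne : x₁ ≠ x₂) (hadj : N'.graph.Adj x₁ x₂) :
    ∃ ε : ℤ, ε ∈ ({-1, 0, 1} : Set ℤ) ∧ ∀ y ∈ N.pts,
      |((N'.dist x₁ y : ℤ) - (N'.setDist x₁ N.pts : ℤ)) -
        ((N'.dist x₂ y : ℤ) - (N'.setDist x₂ N.pts : ℤ)) + ε| ≤ 1 :=
  statement_5_general N N' x₁ x₂ hadj
end

section
/- Let N be a near hexagon in which every line is incident with exactly three points, containing an isometrically embedded full subgeometry H that is a generalized hexagon of order 2 possessing no ovoid. Then every point of N lies at distance at most 1 from the point set of H. -/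
variable {P : Type*}

/-!
Suppose `x` is at distance at least `2` from every point of `H`. Each line of `H` is a line of the
near hexagon, so it has a unique point nearest to `x`; in particular it is not entirely at the
maximal distance `3`, hence it contains a point at distance exactly `2`, and every such point is
nearest to `x`. So every line of `H` carries exactly one point at distance `2` from `x`, and these
points form an ovoid of `H`.
-/

namespace Geom

theorem le_dist_of_le_setDist {G : Geom P} {x z : P} {X : Set P} {n : ℕ}
    (h : n ≤ G.setDist x X) (hz : z ∈ X) : n ≤ G.dist x z :=
  h.trans (Nat.sInf_le ⟨z, hz, rfl⟩)

namespace IsNearPolygon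

variable {N : Geom P} {d : ℕ}

theorem eq_of_forall_dist_le (hN : N.IsNearPolygon d) {x : P} (hx : x ∈ N.pts) {L : Set P}
    (hL : L ∈ N.lines) {y z : P} (hy : y ∈ L) (hz : z ∈ L)
    (hy_min : ∀ w ∈ L, N.dist x y ≤ N.dist x w) (hz_min : ∀ w ∈ L, N.dist x z ≤ N.dist x w) :
    y = z :=
  (hN.2.2.2 x hx L hL).unique ⟨hy, hy_min⟩ ⟨hz, hz_min⟩

theorem exists_mem_line_dist_lt (hN : N.IsNearPolygon d) {x : P} (hx : x ∈ N.pts) {L : Set P}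
    (hL : L ∈ N.lines) : ∃ z ∈ L, N.dist x z < d := by
  by_contra! hfar
  have hmax : ∀ z ∈ L, N.dist x z = d := fun z hz =>
    le_antisymm (hN.2.1 x hx z (N.lines_pts L hL hz)) (hfar z hz)
  have hnearest : ∀ z ∈ L, ∀ w ∈ L, N.dist x z ≤ N.dist x w := fun z hz w hw =>
    (hmax z hz).trans_le (hfar w hw)
  obtain ⟨a, ha, b, hb, hab⟩ := N.two_pts L hL
  exact hab (hN.eq_of_forall_dist_le hx hL ha hb (hnearest a ha) (hnearest b hb))

theorem isOvoid_of_forall_le_dist {k : ℕ} (hN : N.IsNearPolygon (k + 1)) {H : Geom P}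
    (hsub : H.IsSubgeom N) {x : P} (hx : x ∈ N.pts) (hfar : ∀ z ∈ H.pts, k ≤ N.dist x z) :
    H.IsOvoid {z | z ∈ H.pts ∧ N.dist x z = k} := by
  refine ⟨fun z hz => hz.1, fun L hL => ?_⟩
  have hLH : L ⊆ H.pts := H.lines_pts L hL
  have hnearest : ∀ z ∈ L, N.dist x z = k → ∀ w ∈ L, N.dist x z ≤ N.dist x w :=
    fun z _ hzk w hw => hzk ▸ hfar w (hLH hw)
  obtain ⟨y, hy, hy_lt⟩ := hN.exists_mem_line_dist_lt hx (hsub.2 hL)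
  have hyk : N.dist x y = k := le_antisymm (Nat.le_of_lt_succ hy_lt) (hfar y (hLH hy))
  refine ⟨y, ⟨hy, hLH hy, hyk⟩, ?_⟩
  rintro z ⟨hz, -, hzk⟩
  exact hN.eq_of_forall_dist_le hx (hsub.2 hL) hz hy (hnearest z hz hzk) (hnearest y hy hyk)

end IsNearPolygon

end Geom

theorem statement_7_general {P : Type*} (N H : Geom P)
    (hN : N.IsNearPolygon 3)
    (hsub : H.IsSubgeom N)
    (hno : ¬ ∃ O : Set P, H.IsOvoid O) :
    ∀ x ∈ N.pts, N.setDist x H.pts ≤ 1 := by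
  intro x hx
  by_contra! hfar
  exact hno ⟨_, hN.isOvoid_of_forall_le_dist (k := 2) hsub hx
    fun z hz => Geom.le_dist_of_le_setDist hfar hz⟩

theorem statement_7 {P : Type*} (N H : Geom P)
    (hN : N.IsNearPolygon 3)
    (h3 : ∀ L ∈ N.lines, L.ncard = 3)
    (hsub : H.IsSubgeom N) (hiso : H.IsIsometric N)
    (hH : H.IsGenHexagon) (hord : H.HasOrder 2 2)
    (hno : ¬ ∃ O : Set P, H.IsOvoid O) :
    ∀ x ∈ N.pts, N.setDist x H.pts ≤ 1 :=
  statement_7_general N H hN hsub hno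
end

section
/- Let N be a near hexagon in which every line is incident with exactly three points, containing an isometrically embedded full subgeometry H (with point set P) that is a generalized hexagon of order 2. For every line {x1, x2, x3} of N, the three induced valuations f_{x1}, f_{x2}, f_{x3} of H, where f_{x_i}(y) = d(x_i,y) − d(x_i,P) for points y of H, are pairwise distinct. -/
variable {P : Type*}

/-!
Write `P` for the point set of `H`. If `f_a = f_b` for two points `a, b` of a line `{a, b, c}`
of `N`, then `d(a, ·) - d(b, ·)` is constant on `P`, with value `-1`, `0` or `1`; when it is `0`,
`c` is the point of the line nearest to every `y ∈ P`, so `d(a, ·) = d(c, ·) + 1` on `P`. Either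
way some points `x, x'` satisfy `d(x, ·) = d(x', ·) + 1` on `P`, hence `d(x', ·) ≤ 2` on `P`.

Every point of `H` is at distance 3 from some point of `H`, so `x' ∉ P`, and the point of each
line of `H` nearest to `x'` is then collinear with `x'`. Thus the points of `P` collinear with
`x'` meet every line of `H`, no two of them are collinear, and any two are at distance at most 2.
A generalized hexagon with three points per line has no such set `Q`: from `p ∈ Q` go to a
neighbour `u`, along a line through `u` missing `p` to a point `z ∉ Q` (at distance 2 from `p`),
then along a line through `z` missing `u`; its point in `Q` is at distance 3 from `p`.
-/

lemma Set.exists_mem_ne_ne_of_two_lt_ncard {α : Type*} {s : Set α} (hs : 2 < s.ncard)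
    (x y : α) : ∃ z ∈ s, z ≠ x ∧ z ≠ y := by
  have : 1 < (s \ {x}).ncard := by
    have := Set.pred_ncard_le_ncard_sdiff_singleton s x
    omega
  obtain ⟨z, ⟨hzs, hzx⟩, hzy⟩ := Set.exists_ne_of_one_lt_ncard this y
  exact ⟨z, hzs, hzx, hzy⟩

namespace Geom

variable {G : Geom P}

lemma dist_comm (G : Geom P) (x y : P) : G.dist x y = G.dist y x :=
  SimpleGraph.dist_comm

lemma graph_adj_of_mem_line {L : Set P} (hL : L ∈ G.lines) {x y : P} (hx : x ∈ L) (hy : y ∈ L)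
    (hxy : x ≠ y) : G.graph.Adj x y :=
  ⟨hxy, L, hL, hx, hy⟩

lemma dist_le_dist_add_one_of_adj {x y : P} (h : G.graph.Adj x y) (z : P) :
    G.dist x z ≤ G.dist y z + 1 := by
  have hxz : G.dist x z ≤ G.dist x y + G.dist y z := h.reachable.dist_triangle_left z
  have hxy : G.dist x y = 1 := SimpleGraph.dist_eq_one_iff_adj.2 h
  omega

lemma exists_mem_line_ne {L : Set P} (hL : L ∈ G.lines) (x : P) : ∃ y ∈ L, y ≠ x := by
  obtain ⟨a, ha, b, hb, hab⟩ := G.two_pts L hL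
  by_cases hax : a = x
  · exact ⟨b, hb, hax ▸ hab.symm⟩
  · exact ⟨a, ha, hax⟩

namespace IsNearPolygon

variable {d : ℕ} (hG : G.IsNearPolygon d)
include hG

lemma eq_of_dist_eq_zero {x y : P} (hx : x ∈ G.pts) (hy : y ∈ G.pts) (h : G.dist x y = 0) :
    x = y :=
  (hG.1 x hx y hy).dist_eq_zero_iff.1 h

lemma exists_nearest {p : P} (hp : p ∈ G.pts) {L : Set P} (hL : L ∈ G.lines) :
    ∃ w ∈ L, ∀ z ∈ L, z ≠ w → G.dist p z = G.dist p w + 1 := by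
  obtain ⟨w, ⟨hwL, hwmin⟩, huniq⟩ := hG.2.2.2 p hp L hL
  refine ⟨w, hwL, fun z hz hzw => ?_⟩
  have hwz_adj := graph_adj_of_mem_line hL hwL hz hzw.symm
  have hle : G.dist p z ≤ G.dist p w + G.dist w z := hwz_adj.reachable.dist_triangle_right p
  have hwz : G.dist w z = 1 := SimpleGraph.dist_eq_one_iff_adj.2 hwz_adj
  have hne : G.dist p z ≠ G.dist p w := fun he =>
    hzw (huniq z ⟨hz, fun u hu => he ▸ hwmin u hu⟩)
  have := hwmin z hz
  omega

lemma dist_eq_two_of_dist_eq_one {p a z : P} (hp : p ∈ G.pts) {L : Set P} (hL : L ∈ G.lines)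
    (hpL : p ∉ L) (ha : a ∈ L) (hpa : G.dist p a = 1) (hz : z ∈ L) (hza : z ≠ a) :
    G.dist p z = 2 := by
  obtain ⟨w, hwL, hnear⟩ := hG.exists_nearest hp hL
  by_cases haw : a = w
  · subst haw
    rw [hnear z hz hza, hpa]
  · have hpw : G.dist p w = 0 := by
      have := hnear a ha haw
      omega
    exact absurd (hG.eq_of_dist_eq_zero hp (G.lines_pts L hL hwL) hpw ▸ hwL) hpL

end IsNearPolygon

namespace IsGenHexagon

variable (hG : G.IsGenHexagon)
include hG

lemma exists_line_not_mem {x : P} (hx : x ∈ G.pts) {y : P} (hxy : x ≠ y) :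
    ∃ L ∈ G.lines, x ∈ L ∧ y ∉ L := by
  obtain ⟨L₁, hL₁, L₂, hL₂, hne, hxL₁, hxL₂⟩ := hG.2.1 x hx
  by_cases hyL₁ : y ∈ L₁
  · refine ⟨L₂, hL₂, hxL₂, fun hyL₂ => hne ?_⟩
    exact G.unique_line L₁ hL₁ L₂ hL₂ x y hxy hxL₁ hyL₁ hxL₂ hyL₂
  · exact ⟨L₁, hL₁, hxL₁, hyL₁⟩

lemma dist_eq_three {p u z r : P} (hp : p ∈ G.pts) (hpu : G.graph.Adj p u)
    (huz : G.graph.Adj u z) (hpz : G.dist p z = 2) {O : Set P} (hO : O ∈ G.lines)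
    (hzO : z ∈ O) (huO : u ∉ O) (hrO : r ∈ O) (hrz : r ≠ z) : G.dist p r = 3 := by
  obtain ⟨w, hwO, hnear⟩ := hG.1.exists_nearest hp hO
  by_cases hzw : z = w
  · subst hzw
    rw [hnear r hrO hrz, hpz]
  · have hpw : G.graph.Adj p w := by
      have hpw : G.dist p w = 1 := by
        have := hnear z hzO hzw
        omega
      exact SimpleGraph.dist_eq_one_iff_adj.1 hpw
    obtain ⟨c, -, hc⟩ := hG.2.2 p hp z (G.lines_pts O hO hzO) hpz
    have hwz : G.graph.Adj w z := graph_adj_of_mem_line hO hwO hzO (Ne.symm hzw)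
    have hwu : w = u := (hc w ⟨hpw, hwz⟩).trans (hc u ⟨hpu, huz⟩).symm
    exact absurd (hwu ▸ hwO) huO

lemma exists_dist_eq_three {p : P} (hp : p ∈ G.pts) : ∃ r ∈ G.pts, G.dist p r = 3 := by
  obtain ⟨L, hL, -, -, -, hpL, -⟩ := hG.2.1 p hp
  obtain ⟨u, huL, hup⟩ := exists_mem_line_ne hL p
  have hpu := graph_adj_of_mem_line hL hpL huL hup.symm
  obtain ⟨M, hM, huM, hpM⟩ := hG.exists_line_not_mem (G.lines_pts L hL huL) hup
  obtain ⟨z, hzM, hzu⟩ := exists_mem_line_ne hM u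
  have hpz := hG.1.dist_eq_two_of_dist_eq_one hp hM hpM huM
    (SimpleGraph.dist_eq_one_iff_adj.2 hpu) hzM hzu
  obtain ⟨O, hO, hzO, huO⟩ := hG.exists_line_not_mem (G.lines_pts M hM hzM) hzu
  obtain ⟨r, hrO, hrz⟩ := exists_mem_line_ne hO z
  exact ⟨r, G.lines_pts O hO hrO, hG.dist_eq_three hp hpu
    (graph_adj_of_mem_line hM huM hzM hzu.symm) hpz hO hzO huO hrO hrz⟩

lemma exists_dist_eq_three_of_forall_lines_meet {t : ℕ} (hord : G.HasOrder 2 t) {Q : Set P}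
    (hmeet : ∀ L ∈ G.lines, ∃ q ∈ L, q ∈ Q)
    (hQ : ∀ q₁ ∈ Q, ∀ q₂ ∈ Q, ¬ G.graph.Adj q₁ q₂) :
    ∃ p ∈ Q, ∃ r ∈ Q, G.dist p r = 3 := by
  obtain ⟨x, hx, -⟩ := hG.1.2.2.1
  obtain ⟨L, hL, -, -, -, -, -⟩ := hG.2.1 x hx
  obtain ⟨p, hpL, hpQ⟩ := hmeet L hL
  obtain ⟨u, huL, hup⟩ := exists_mem_line_ne hL p
  have hpu := graph_adj_of_mem_line hL hpL huL hup.symm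
  obtain ⟨M, hM, huM, hpM⟩ := hG.exists_line_not_mem (G.lines_pts L hL huL) hup
  obtain ⟨q, hqM, hqQ⟩ := hmeet M hM
  obtain ⟨z, hzM, hzu, hzq⟩ :=
    Set.exists_mem_ne_ne_of_two_lt_ncard (by rw [hord.1 M hM]; omega) u q
  have hpz := hG.1.dist_eq_two_of_dist_eq_one (G.lines_pts L hL hpL) hM hpM huM
    (SimpleGraph.dist_eq_one_iff_adj.2 hpu) hzM hzu
  obtain ⟨O, hO, hzO, huO⟩ := hG.exists_line_not_mem (G.lines_pts M hM hzM) hzu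
  obtain ⟨r, hrO, hrQ⟩ := hmeet O hO
  have hrz : r ≠ z := by
    rintro rfl
    exact hQ q hqQ r hrQ (graph_adj_of_mem_line hM hqM hzM hzq.symm)
  exact ⟨p, hpQ, r, hrQ, hG.dist_eq_three (G.lines_pts L hL hpL) hpu
    (graph_adj_of_mem_line hM huM hzM hzu.symm) hpz hO hzO huO hrO hrz⟩

end IsGenHexagon

end Geom

open Geom

theorem not_forall_dist_eq_dist_add_one {N H : Geom P} (hN : N.IsNearPolygon 3)
    (hsub : H.IsSubgeom N) (hiso : H.IsIsometric N) (hH : H.IsGenHexagon) {t : ℕ}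
    (hord : H.HasOrder 2 t) {x x' : P} (hx : x ∈ N.pts) (hx' : x' ∈ N.pts) :
    ¬ ∀ y ∈ H.pts, N.dist x y = N.dist x' y + 1 := by
  intro h
  have hle : ∀ y ∈ H.pts, N.dist x' y ≤ 2 := fun y hy => by
    have := hN.2.1 x hx y (hsub.1 hy)
    have := h y hy
    omega
  by_cases hx'H : x' ∈ H.pts
  · obtain ⟨r, hr, hr3⟩ := hH.exists_dist_eq_three hx'H
    rw [hiso x' hx'H r hr] at hr3
    have := hle r hr
    omega
  have hpos : ∀ y ∈ H.pts, N.dist x' y ≠ 0 := fun y hy h0 =>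
    hx'H (hN.eq_of_dist_eq_zero hx' (hsub.1 hy) h0 ▸ hy)
  let Q : Set P := {y ∈ H.pts | N.dist x' y = 1}
  have hmeet : ∀ M ∈ H.lines, ∃ q ∈ M, q ∈ Q := by
    intro M hM
    obtain ⟨w, hwM, hnear⟩ := hN.exists_nearest hx' (hsub.2 hM)
    obtain ⟨z, hzM, hzw⟩ := exists_mem_line_ne hM w
    have := hnear z hzM hzw
    have := hle z (H.lines_pts M hM hzM)
    have := hpos w (H.lines_pts M hM hwM)
    exact ⟨w, hwM, H.lines_pts M hM hwM, by omega⟩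
  have hQ : ∀ q₁ ∈ Q, ∀ q₂ ∈ Q, ¬ H.graph.Adj q₁ q₂ := by
    rintro q₁ ⟨-, h₁⟩ q₂ ⟨-, h₂⟩ ⟨hne, M, hM, hq₁M, hq₂M⟩
    have := hN.dist_eq_two_of_dist_eq_one hx' (hsub.2 hM) (fun h => hx'H (H.lines_pts M hM h))
      hq₁M h₁ hq₂M hne.symm
    omega
  obtain ⟨p, ⟨hp, hp1⟩, r, ⟨hr, hr1⟩, hpr⟩ :=
    hH.exists_dist_eq_three_of_forall_lines_meet hord hmeet hQ
  have hx'r : N.dist x' r ≠ 0 := by omega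
  have hpr_le : N.dist p r ≤ N.dist p x' + N.dist x' r :=
    (SimpleGraph.Reachable.of_dist_ne_zero hx'r).dist_triangle_right p
  rw [hiso p hp r hr] at hpr
  rw [N.dist_comm p x'] at hpr_le
  omega

theorem not_forall_dist_eq_dist {N H : Geom P} (hN : N.IsNearPolygon 3)
    (hsub : H.IsSubgeom N) (hiso : H.IsIsometric N) (hH : H.IsGenHexagon) {t : ℕ}
    (hord : H.HasOrder 2 t) {a b c : P} (hL : ({a, b, c} : Set P) ∈ N.lines) (hab : a ≠ b)
    (hac : a ≠ c) : ¬ ∀ y ∈ H.pts, N.dist a y = N.dist b y := by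
  intro h
  have ha : a ∈ N.pts := N.lines_pts _ hL (by simp)
  have hc : c ∈ N.pts := N.lines_pts _ hL (by simp)
  refine not_forall_dist_eq_dist_add_one hN hsub hiso hH hord ha hc fun y hy => ?_
  obtain ⟨w, hw, hnear⟩ := hN.exists_nearest (hsub.1 hy) hL
  have := h y hy
  rw [N.dist_comm a, N.dist_comm b] at this
  rw [N.dist_comm a, N.dist_comm c]
  simp only [Set.mem_insert_iff, Set.mem_singleton_iff] at hw
  rcases hw with rfl | rfl | rfl
  · have := hnear b (by simp) hab.symm
    omega
  · have := hnear a (by simp) hab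
    omega
  · exact hnear a (by simp) hac

theorem exists_dist_sub_setDist_ne {N H : Geom P} (hN : N.IsNearPolygon 3)
    (hsub : H.IsSubgeom N) (hiso : H.IsIsometric N) (hH : H.IsGenHexagon) {t : ℕ}
    (hord : H.HasOrder 2 t) {a b c : P} (hL : ({a, b, c} : Set P) ∈ N.lines) (hab : a ≠ b)
    (hac : a ≠ c) :
    ∃ y ∈ H.pts, (N.dist a y : ℤ) - (N.setDist a H.pts : ℤ) ≠
      (N.dist b y : ℤ) - (N.setDist b H.pts : ℤ) := by
  by_contra! h
  have ha : a ∈ N.pts := N.lines_pts _ hL (by simp)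
  have hb : b ∈ N.pts := N.lines_pts _ hL (by simp)
  have hadj : N.graph.Adj a b := graph_adj_of_mem_line hL (by simp) (by simp) hab
  obtain ⟨p, hp, -⟩ := hH.1.2.2.1
  have hap := dist_le_dist_add_one_of_adj hadj p
  have hbp := dist_le_dist_add_one_of_adj hadj.symm p
  have hfp := h p hp
  rcases lt_trichotomy (N.setDist a H.pts) (N.setDist b H.pts) with hlt | heq | hgt
  · exact not_forall_dist_eq_dist_add_one hN hsub hiso hH hord hb ha fun y hy => by
      have := h y hy
      omega
  · exact not_forall_dist_eq_dist hN hsub hiso hH hord hL hab hac fun y hy => by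
      have := h y hy
      omega
  · exact not_forall_dist_eq_dist_add_one hN hsub hiso hH hord ha hb fun y hy => by
      have := h y hy
      omega

theorem statement_9_general {P : Type*} (N H : Geom P)
    (hN : N.IsNearPolygon 3)
    (hsub : H.IsSubgeom N) (hiso : H.IsIsometric N)
    (hH : H.IsGenHexagon) (hord : H.HasOrder 2 2)
    (x₁ x₂ x₃ : P) (h12 : x₁ ≠ x₂) (h13 : x₁ ≠ x₃) (h23 : x₂ ≠ x₃)
    (hL : ({x₁, x₂, x₃} : Set P) ∈ N.lines) :
    (∃ y ∈ H.pts, (N.dist x₁ y : ℤ) - (N.setDist x₁ H.pts : ℤ) ≠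
      (N.dist x₂ y : ℤ) - (N.setDist x₂ H.pts : ℤ)) ∧
    (∃ y ∈ H.pts, (N.dist x₁ y : ℤ) - (N.setDist x₁ H.pts : ℤ) ≠
      (N.dist x₃ y : ℤ) - (N.setDist x₃ H.pts : ℤ)) ∧
    (∃ y ∈ H.pts, (N.dist x₂ y : ℤ) - (N.setDist x₂ H.pts : ℤ) ≠
      (N.dist x₃ y : ℤ) - (N.setDist x₃ H.pts : ℤ)) := by
  have hL₁₃₂ : ({x₁, x₃, x₂} : Set P) ∈ N.lines := by rwa [Set.pair_comm]
  have hL₂₃₁ : ({x₂, x₃, x₁} : Set P) ∈ N.lines := by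
    rwa [Set.pair_comm, Set.insert_comm]
  exact ⟨exists_dist_sub_setDist_ne hN hsub hiso hH hord hL h12 h13,
    exists_dist_sub_setDist_ne hN hsub hiso hH hord hL₁₃₂ h13 h12,
    exists_dist_sub_setDist_ne hN hsub hiso hH hord hL₂₃₁ h23 h12.symm⟩

theorem statement_9 {P : Type*} (N H : Geom P)
    (hN : N.IsNearPolygon 3)
    (h3 : ∀ L ∈ N.lines, L.ncard = 3)
    (hsub : H.IsSubgeom N) (hiso : H.IsIsometric N)
    (hH : H.IsGenHexagon) (hord : H.HasOrder 2 2)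
    (x₁ x₂ x₃ : P) (h12 : x₁ ≠ x₂) (h13 : x₁ ≠ x₃) (h23 : x₂ ≠ x₃)
    (hL : ({x₁, x₂, x₃} : Set P) ∈ N.lines) :
    (∃ y ∈ H.pts, (N.dist x₁ y : ℤ) - (N.setDist x₁ H.pts : ℤ) ≠
      (N.dist x₂ y : ℤ) - (N.setDist x₂ H.pts : ℤ)) ∧
    (∃ y ∈ H.pts, (N.dist x₁ y : ℤ) - (N.setDist x₁ H.pts : ℤ) ≠
      (N.dist x₃ y : ℤ) - (N.setDist x₃ H.pts : ℤ)) ∧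
    (∃ y ∈ H.pts, (N.dist x₂ y : ℤ) - (N.setDist x₂ H.pts : ℤ) ≠
      (N.dist x₃ y : ℤ) - (N.setDist x₃ H.pts : ℤ)) :=
  statement_9_general N H hN hsub hiso hH hord x₁ x₂ x₃ h12 h13 h23 hL
end

section
/- Let S be a finite near hexagon of order (s,t) having v points. Then v ≤ (s+1)(s²t² + st + 1), and equality holds if and only if S is a generalized hexagon. -/
variable {P : Type*}

/-!
Fix a point `x` and let `Γᵢ` be the set of points at distance `i` from `x`. Since every line has a
unique point nearest to `x`, each point `z` satisfies
`s · #(neighbours closer to x) + #(neighbours further from x) = s(t + 1)`.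
Double counting the edges between `Γ₁` and `Γ₂` (there are `s²t(t + 1)` of them) and between `Γ₂`
and `Γ₃` yields `|Γ₃| = s|Γ₂| - s³t`, hence `v = 1 + s + st + (s + 1)|Γ₂| - s³t`. Each point of `Γ₂`
lies on at least one of the edges from `Γ₁`, so `|Γ₂| ≤ s²t(t + 1)`, with equality iff every point
at distance 2 from `x` has a unique common neighbour with `x`. As `v` does not depend on `x`,
equality at one point forces it at all points.
-/

namespace SimpleGraph

variable {V : Type*} {G : SimpleGraph V}

theorem exists_adj_dist_eq_of_dist_eq_add_one {u v : V} {n : ℕ}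
    (h : G.dist u v = n + 1) : ∃ w, G.Adj w v ∧ G.dist u w = n := by
  obtain ⟨p, hp⟩ := exists_walk_of_dist_ne_zero (show G.dist u v ≠ 0 by omega)
  have hnil : ¬p.Nil := by rw [← Walk.length_eq_zero_iff]; omega
  have hadj := p.adj_penultimate hnil
  refine ⟨p.penultimate, hadj, le_antisymm ?_ ?_⟩
  · have := dist_le p.dropLast
    rw [Walk.length_dropLast] at this
    omega
  · have := hadj.reachable.dist_triangle_right u
    rw [dist_eq_one_iff_adj.mpr hadj] at this
    omega

open Finset in
theorem sum_card_filter_adj_comm [DecidableRel G.Adj] (A B : Finset V) :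
    ∑ a ∈ A, #{b ∈ B | G.Adj a b} = ∑ b ∈ B, #{a ∈ A | G.Adj b a} := by
  simp_rw [Finset.card_filter]
  rw [Finset.sum_comm]
  simp_rw [G.adj_comm]

end SimpleGraph

theorem Set.Finite.ncard_biUnion_of_ncard_eq {ι α : Type*} {I : Set ι} (hI : I.Finite)
    {f : ι → Set α} {k : ℕ} (hf : ∀ i ∈ I, (f i).Finite)
    (hk : ∀ i ∈ I, (f i).ncard = k) (hd : I.PairwiseDisjoint f) :
    (⋃ i ∈ I, f i).ncard = I.ncard * k := by
  rw [hI.ncard_biUnion hf hd, finsum_mem_congr rfl hk, finsum_mem_eq_finite_toFinset_sum _ hI,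
    Finset.sum_const, smul_eq_mul, Set.ncard_eq_toFinset_card _ hI]

namespace Geom

variable {S : Geom P} {x y z : P} {s t d : ℕ}

def linesThrough (S : Geom P) (z : P) : Set (Set P) := {L | L ∈ S.lines ∧ z ∈ L}

def upNbrs (S : Geom P) (x z : P) : Set P :=
  {y | S.graph.Adj z y ∧ S.dist x y = S.dist x z + 1}

def downNbrs (S : Geom P) (x z : P) : Set P :=
  {y | S.graph.Adj z y ∧ S.dist x y + 1 = S.dist x z}

def IsProj (S : Geom P) (x : P) (π : Set P → P) : Prop :=
  ∀ L ∈ S.lines, π L ∈ L ∧ ∀ z ∈ L, z ≠ π L → S.dist x z = S.dist x (π L) + 1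

@[simp]
theorem dist_self (x : P) : S.dist x x = 0 := SimpleGraph.dist_self

theorem mem_pts_of_adj_s15 (h : S.graph.Adj y z) : z ∈ S.pts := by
  obtain ⟨-, L, hL, -, hz⟩ := h
  exact S.lines_pts L hL hz

theorem adj_of_mem_line {L : Set P} (hL : L ∈ S.lines) (hy : y ∈ L) (hz : z ∈ L)
    (hyz : y ≠ z) : S.graph.Adj y z :=
  ⟨hyz, L, hL, hy, hz⟩

theorem dist_le_add_one_of_adj (h : S.graph.Adj y z) (x : P) :
    S.dist x z ≤ S.dist x y + 1 := by
  have := h.reachable.dist_triangle_right x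
  rwa [SimpleGraph.dist_eq_one_iff_adj.mpr h] at this

theorem linesThrough_finite (hfin : S.pts.Finite) (z : P) : (S.linesThrough z).Finite :=
  hfin.finite_subsets.subset fun L hL => S.lines_pts L hL.1

theorem HasOrder.pos_s (hord : S.HasOrder s t) {L : Set P} (hL : L ∈ S.lines) :
    0 < s := by
  obtain ⟨a, ha, b, hb, hab⟩ := S.two_pts L hL
  by_contra! hs
  obtain ⟨c, rfl⟩ := Set.ncard_eq_one.mp (by simpa [Nat.le_zero.mp hs] using hord.1 L hL)
  exact hab (ha.trans hb.symm)

theorem HasOrder.ncard_linesThrough (hord : S.HasOrder s t) (hz : z ∈ S.pts) :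
    (S.linesThrough z).ncard = t + 1 :=
  hord.2 z hz

theorem HasOrder.exists_two_lines (hord : S.HasOrder s t) (ht : 0 < t) (hx : x ∈ S.pts) :
    ∃ L₁ ∈ S.lines, ∃ L₂ ∈ S.lines, L₁ ≠ L₂ ∧ x ∈ L₁ ∧ x ∈ L₂ := by
  have hcard : 1 < (S.linesThrough x).ncard := by
    rw [hord.ncard_linesThrough hx]
    omega
  obtain ⟨L₁, hL₁, L₂, hL₂, hne⟩ :=
    (Set.one_lt_ncard (Set.finite_of_ncard_pos (by omega))).mp hcard
  exact ⟨L₁, hL₁.1, L₂, hL₂.1, hne, hL₁.2, hL₂.2⟩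

theorem IsNearPolygon.eq_of_dist_eq_zero_s15 (hS : S.IsNearPolygon d) (hx : x ∈ S.pts)
    (hy : y ∈ S.pts) (h : S.dist x y = 0) : x = y :=
  (hS.1 x hx y hy).dist_eq_zero_iff.mp h

theorem IsNearPolygon.exists_isProj (hS : S.IsNearPolygon d) (hx : x ∈ S.pts) :
    ∃ π, S.IsProj x π := by
  have hproj : ∀ L ∈ S.lines, ∃ p ∈ L, ∀ z ∈ L, z ≠ p →
      S.dist x z = S.dist x p + 1 := by
    intro L hL
    obtain ⟨p, ⟨hp, hmin⟩, huniq⟩ := hS.2.2.2 x hx L hL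
    refine ⟨p, hp, fun z hz hzp => ?_⟩
    have hle := dist_le_add_one_of_adj (adj_of_mem_line hL hp hz hzp.symm) x
    have hne : S.dist x z ≠ S.dist x p := fun h =>
      hzp (huniq z ⟨hz, fun w hw => h ▸ hmin w hw⟩)
    have := hmin z hz
    omega
  have : Nonempty P := ⟨x⟩
  choose! π hπ using hproj
  exact ⟨π, hπ⟩

theorem IsProj.upNbrs_eq {π : Set P → P} (hπ : S.IsProj x π) (z : P) :
    S.upNbrs x z = ⋃ L ∈ S.linesThrough z ∩ {L | π L = z}, L \ {z} := by
  ext y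
  simp only [upNbrs, linesThrough, Set.mem_ofPred_eq, Set.mem_iUnion, Set.mem_inter_iff,
    Set.mem_sdiff, Set.mem_singleton_iff, exists_prop]
  constructor
  · rintro ⟨⟨hzy, L, hL, hzL, hyL⟩, hdy⟩
    obtain ⟨-, hfar⟩ := hπ L hL
    refine ⟨L, ⟨⟨hL, hzL⟩, ?_⟩, hyL, hzy.symm⟩
    by_contra hπz
    have hz := hfar z hzL (Ne.symm hπz)
    rcases eq_or_ne y (π L) with rfl | hy
    · omega
    · have := hfar y hyL hy
      omega
  · rintro ⟨L, ⟨⟨hL, hzL⟩, hπz⟩, hyL, hyz⟩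
    refine ⟨adj_of_mem_line hL hzL hyL (Ne.symm hyz), ?_⟩
    rw [← hπz] at hyz ⊢
    exact (hπ L hL).2 y hyL hyz

theorem IsProj.ncard_upNbrs {π : Set P → P} (hπ : S.IsProj x π) (hfin : S.pts.Finite)
    (hord : S.HasOrder s t) (z : P) :
    (S.upNbrs x z).ncard = (S.linesThrough z ∩ {L | π L = z}).ncard * s := by
  rw [hπ.upNbrs_eq]
  refine ((linesThrough_finite hfin z).inter_of_left _).ncard_biUnion_of_ncard_eq
    (fun L hL => (hfin.subset (S.lines_pts L hL.1.1)).sdiff) (fun L hL => ?_) ?_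
  · rw [Set.ncard_sdiff_singleton_of_mem hL.1.2, hord.1 L hL.1.1, Nat.add_sub_cancel]
  · rintro L ⟨⟨hL, hzL⟩, -⟩ L' ⟨⟨hL', hzL'⟩, -⟩ hne
    refine Set.disjoint_left.mpr fun w ⟨hwL, hwz⟩ ⟨hwL', _⟩ => hne ?_
    exact S.unique_line L hL L' hL' z w (Ne.symm hwz) hzL hwL hzL' hwL'

theorem IsProj.downNbrs_eq {π : Set P → P} (hπ : S.IsProj x π) (z : P) :
    S.downNbrs x z = π '' (S.linesThrough z \ {L | π L = z}) := by
  ext w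
  simp only [downNbrs, linesThrough, Set.mem_ofPred_eq, Set.mem_image, Set.mem_sdiff]
  constructor
  · rintro ⟨⟨hzw, L, hL, hzL, hwL⟩, hdw⟩
    obtain ⟨-, hfar⟩ := hπ L hL
    have hπz : π L ≠ z := by
      intro h
      have := hfar w hwL (h ▸ hzw.symm)
      rw [h] at this
      omega
    have hw : w = π L := by
      by_contra hw
      have := hfar w hwL hw
      have := hfar z hzL hπz.symm
      omega
    exact ⟨L, ⟨⟨hL, hzL⟩, hπz⟩, hw.symm⟩
  · rintro ⟨L, ⟨⟨hL, hzL⟩, hπz⟩, rfl⟩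
    obtain ⟨hπL, hfar⟩ := hπ L hL
    exact ⟨adj_of_mem_line hL hzL hπL (Ne.symm hπz), (hfar z hzL (Ne.symm hπz)).symm⟩

theorem IsProj.ncard_downNbrs {π : Set P → P} (hπ : S.IsProj x π) (z : P) :
    (S.downNbrs x z).ncard = (S.linesThrough z \ {L | π L = z}).ncard := by
  rw [hπ.downNbrs_eq]
  refine Set.InjOn.ncard_image ?_
  rintro L ⟨⟨hL, hzL⟩, hπz⟩ L' ⟨⟨hL', hzL'⟩, -⟩ heq
  exact S.unique_line L hL L' hL' z (π L) (Ne.symm hπz) hzL (hπ L hL).1 hzL'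
    (heq ▸ (hπ L' hL').1)

/-- Each line through `z` contributes either one neighbour closer to `x` or `s` neighbours
further from `x`. -/
theorem IsNearPolygon.mul_ncard_downNbrs_add_ncard_upNbrs (hS : S.IsNearPolygon d)
    (hfin : S.pts.Finite) (hord : S.HasOrder s t) (hx : x ∈ S.pts) (hz : z ∈ S.pts) :
    s * (S.downNbrs x z).ncard + (S.upNbrs x z).ncard = s * (t + 1) := by
  obtain ⟨π, hπ⟩ := hS.exists_isProj hx
  rw [hπ.ncard_downNbrs, hπ.ncard_upNbrs hfin hord, ← hord.ncard_linesThrough hz,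
    ← Set.ncard_inter_add_ncard_sdiff_eq_ncard (S.linesThrough z) {L | π L = z}
      (linesThrough_finite hfin z)]
  ring


theorem downNbrs_self (S : Geom P) (x : P) : S.downNbrs x x = ∅ := by
  simp [downNbrs]

theorem IsNearPolygon.downNbrs_eq_singleton (hS : S.IsNearPolygon d) (hx : x ∈ S.pts)
    (hz : S.dist x z = 1) : S.downNbrs x z = {x} := by
  have hxz : S.graph.Adj x z := SimpleGraph.dist_eq_one_iff_adj.mp hz
  ext w
  simp only [downNbrs, Set.mem_ofPred_eq, Set.mem_singleton_iff, hz]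
  constructor
  · rintro ⟨hzw, hw⟩
    exact (hS.eq_of_dist_eq_zero_s15 hx (mem_pts_of_adj_s15 hzw) (by omega)).symm
  · rintro rfl
    simp [hxz.symm]

theorem IsNearPolygon.upNbrs_eq_empty (hS : S.IsNearPolygon d) (hx : x ∈ S.pts)
    (hz : S.dist x z = d) : S.upNbrs x z = ∅ := by
  refine Set.eq_empty_of_forall_notMem fun y ⟨hzy, hy⟩ => ?_
  have := hS.2.1 x hx y (mem_pts_of_adj_s15 hzy)
  omega

theorem IsNearPolygon.ncard_upNbrs_self (hS : S.IsNearPolygon d) (hfin : S.pts.Finite)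
    (hord : S.HasOrder s t) (hx : x ∈ S.pts) : (S.upNbrs x x).ncard = s * (t + 1) := by
  simpa [downNbrs_self] using hS.mul_ncard_downNbrs_add_ncard_upNbrs hfin hord hx hx

theorem IsNearPolygon.ncard_upNbrs_of_dist_eq_one (hS : S.IsNearPolygon d) (hfin : S.pts.Finite)
    (hord : S.HasOrder s t) (hx : x ∈ S.pts) (hz : S.dist x z = 1) :
    (S.upNbrs x z).ncard = s * t := by
  have hzp : z ∈ S.pts := mem_pts_of_adj_s15 (SimpleGraph.dist_eq_one_iff_adj.mp hz)
  have := hS.mul_ncard_downNbrs_add_ncard_upNbrs hfin hord hx hzp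
  rw [hS.downNbrs_eq_singleton hx hz, Set.ncard_singleton] at this
  linarith

theorem IsNearPolygon.ncard_downNbrs_of_dist_eq (hS : S.IsNearPolygon (d + 1))
    (hfin : S.pts.Finite) (hord : S.HasOrder s t) (hx : x ∈ S.pts) (hz : S.dist x z = d + 1) :
    (S.downNbrs x z).ncard = t + 1 := by
  obtain ⟨y, hyz, -⟩ := SimpleGraph.exists_adj_dist_eq_of_dist_eq_add_one hz
  obtain ⟨-, L, hL, -⟩ := id hyz
  have hs := hord.pos_s hL
  have hzp : z ∈ S.pts := mem_pts_of_adj_s15 hyz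
  have := hS.mul_ncard_downNbrs_add_ncard_upNbrs hfin hord hx hzp
  rw [hS.upNbrs_eq_empty hx hz, Set.ncard_empty, add_zero] at this
  exact Nat.eq_of_mul_eq_mul_left hs this


noncomputable def sphere {S : Geom P} (hfin : S.pts.Finite) (x : P) (i : ℕ) : Finset P :=
  {y ∈ hfin.toFinset | S.dist x y = i}

section Counting

open Finset Classical

variable {hfin : S.pts.Finite} {i : ℕ}

theorem mem_sphere : y ∈ sphere hfin x i ↔ y ∈ S.pts ∧ S.dist x y = i := by
  simp [sphere]

theorem card_filter_adj_sphere_succ (hz : S.dist x z = i) :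
    #{y ∈ sphere hfin x (i + 1) | S.graph.Adj z y} = (S.upNbrs x z).ncard := by
  rw [← Set.ncard_coe_finset]
  congr 1
  ext y
  simp only [coe_filter, mem_sphere, upNbrs, Set.mem_ofPred_eq, hz]
  exact ⟨fun ⟨⟨_, hy⟩, hzy⟩ => ⟨hzy, hy⟩,
    fun ⟨hzy, hy⟩ => ⟨⟨mem_pts_of_adj_s15 hzy, hy⟩, hzy⟩⟩

theorem card_filter_adj_sphere_pred (hz : S.dist x z = i + 1) :
    #{y ∈ sphere hfin x i | S.graph.Adj z y} = (S.downNbrs x z).ncard := by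
  rw [← Set.ncard_coe_finset]
  congr 1
  ext y
  simp only [coe_filter, mem_sphere, downNbrs, Set.mem_ofPred_eq, hz, Nat.add_right_cancel_iff]
  exact ⟨fun ⟨⟨_, hy⟩, hzy⟩ => ⟨hzy, hy⟩,
    fun ⟨hzy, hy⟩ => ⟨⟨mem_pts_of_adj_s15 hzy, hy⟩, hzy⟩⟩

theorem card_filter_adj_sphere_pred_pos (hy : y ∈ sphere hfin x (i + 1)) :
    0 < #{z ∈ sphere hfin x i | S.graph.Adj y z} := by
  obtain ⟨z, hzy, hz⟩ := SimpleGraph.exists_adj_dist_eq_of_dist_eq_add_one (mem_sphere.1 hy).2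
  exact card_pos.2
    ⟨z, mem_filter.2 ⟨mem_sphere.2 ⟨mem_pts_of_adj_s15 hzy.symm, hz⟩, hzy.symm⟩⟩

theorem card_filter_adj_sphere_one_eq_one_iff :
    #{z ∈ sphere hfin x 1 | S.graph.Adj y z} = 1 ↔
      ∃! z, S.graph.Adj x z ∧ S.graph.Adj z y := by
  rw [card_eq_one_iff_existsUnique]
  refine existsUnique_congr fun z => ?_
  rw [mem_filter, mem_sphere, S.graph.adj_comm y z]
  exact ⟨fun ⟨⟨_, hz⟩, hzy⟩ => ⟨SimpleGraph.dist_eq_one_iff_adj.mp hz, hzy⟩,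
    fun ⟨hxz, hzy⟩ => ⟨⟨mem_pts_of_adj_s15 hxz, SimpleGraph.dist_eq_one_iff_adj.mpr hxz⟩,
      hzy⟩⟩

theorem IsNearPolygon.sphere_zero (hS : S.IsNearPolygon d) (hfin : S.pts.Finite)
    (hx : x ∈ S.pts) : sphere hfin x 0 = {x} := by
  ext y
  rw [mem_sphere, mem_singleton]
  refine ⟨fun ⟨hy, h⟩ => (hS.eq_of_dist_eq_zero_s15 hx hy h).symm, ?_⟩
  rintro rfl
  exact ⟨hx, dist_self y⟩

theorem IsNearPolygon.card_sphere_one (hS : S.IsNearPolygon d) (hfin : S.pts.Finite)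
    (hord : S.HasOrder s t) (hx : x ∈ S.pts) : #(sphere hfin x 1) = s * (t + 1) := by
  have hΓ₁ : sphere hfin x 1 = {y ∈ sphere hfin x (0 + 1) | S.graph.Adj x y} := by
    ext y
    simp only [mem_filter, mem_sphere, zero_add, iff_self_and, and_imp]
    exact fun _ hy => SimpleGraph.dist_eq_one_iff_adj.mp hy
  rw [hΓ₁, card_filter_adj_sphere_succ (dist_self x), hS.ncard_upNbrs_self hfin hord hx]

theorem IsNearPolygon.sum_card_filter_adj_sphere_one (hS : S.IsNearPolygon d)
    (hfin : S.pts.Finite) (hord : S.HasOrder s t) (hx : x ∈ S.pts) :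
    ∑ y ∈ sphere hfin x 2, #{z ∈ sphere hfin x 1 | S.graph.Adj y z} =
      s ^ 2 * t * (t + 1) := by
  rw [← SimpleGraph.sum_card_filter_adj_comm, sum_congr rfl fun z hz =>
    (card_filter_adj_sphere_succ (mem_sphere.1 hz).2).trans
      (hS.ncard_upNbrs_of_dist_eq_one hfin hord hx (mem_sphere.1 hz).2),
    sum_const, hS.card_sphere_one hfin hord hx, smul_eq_mul]
  ring

theorem IsNearPolygon.card_sphere_three_add (hS : S.IsNearPolygon 3) (hfin : S.pts.Finite)
    (hord : S.HasOrder s t) (hx : x ∈ S.pts) :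
    #(sphere hfin x 3) + s ^ 3 * t = s * #(sphere hfin x 2) := by
  have h23 : ∑ y ∈ sphere hfin x 2, #{u ∈ sphere hfin x 3 | S.graph.Adj y u} =
      #(sphere hfin x 3) * (t + 1) := by
    rw [SimpleGraph.sum_card_filter_adj_comm, sum_congr rfl fun u hu =>
      (card_filter_adj_sphere_pred (mem_sphere.1 hu).2).trans
        (hS.ncard_downNbrs_of_dist_eq hfin hord hx (mem_sphere.1 hu).2),
      sum_const, smul_eq_mul]
  have hloc : ∀ y ∈ sphere hfin x 2, s * #{z ∈ sphere hfin x 1 | S.graph.Adj y z} +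
      #{u ∈ sphere hfin x 3 | S.graph.Adj y u} = s * (t + 1) := fun y hy => by
    rw [card_filter_adj_sphere_pred (mem_sphere.1 hy).2,
      card_filter_adj_sphere_succ (mem_sphere.1 hy).2]
    exact hS.mul_ncard_downNbrs_add_ncard_upNbrs hfin hord hx (mem_sphere.1 hy).1
  have hsum := sum_congr rfl hloc
  rw [sum_add_distrib, ← mul_sum, hS.sum_card_filter_adj_sphere_one hfin hord hx, h23,
    sum_const, smul_eq_mul] at hsum
  refine Nat.eq_of_mul_eq_mul_right (Nat.succ_pos t) ?_
  linarith

theorem IsNearPolygon.ncard_pts_add (hS : S.IsNearPolygon 3) (hfin : S.pts.Finite)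
    (hord : S.HasOrder s t) (hx : x ∈ S.pts) :
    S.pts.ncard + s ^ 3 * t = 1 + s + s * t + (s + 1) * #(sphere hfin x 2) := by
  have hpart : S.pts.ncard = ∑ i ∈ range 4, #(sphere hfin x i) := by
    rw [Set.ncard_eq_toFinset_card _ hfin]
    exact card_eq_sum_card_fiberwise fun y hy =>
      mem_range.2 (Nat.lt_succ_of_le (hS.2.1 x hx y (hfin.mem_toFinset.1 hy)))
  rw [hpart, sum_range_succ, sum_range_succ, sum_range_succ, sum_range_one,
    hS.sphere_zero hfin hx, card_singleton, hS.card_sphere_one hfin hord hx]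
  linarith [hS.card_sphere_three_add hfin hord hx]

theorem IsNearPolygon.card_sphere_two_le (hS : S.IsNearPolygon d) (hfin : S.pts.Finite)
    (hord : S.HasOrder s t) (hx : x ∈ S.pts) : #(sphere hfin x 2) ≤ s ^ 2 * t * (t + 1) := by
  rw [← hS.sum_card_filter_adj_sphere_one hfin hord hx, card_eq_sum_ones]
  exact sum_le_sum fun y hy => card_filter_adj_sphere_pred_pos hy

theorem IsNearPolygon.card_sphere_two_eq_iff (hS : S.IsNearPolygon d) (hfin : S.pts.Finite)
    (hord : S.HasOrder s t) (hx : x ∈ S.pts) :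
    #(sphere hfin x 2) = s ^ 2 * t * (t + 1) ↔
      ∀ y ∈ S.pts, S.dist x y = 2 → ∃! z, S.graph.Adj x z ∧ S.graph.Adj z y := by
  rw [← hS.sum_card_filter_adj_sphere_one hfin hord hx, card_eq_sum_ones,
    sum_eq_sum_iff_of_le fun y hy => card_filter_adj_sphere_pred_pos hy]
  simp only [mem_sphere, and_imp, one_add_one_eq_two, eq_comm (a := 1),
    card_filter_adj_sphere_one_eq_one_iff]

theorem HasOrder.pos_t (hord : S.HasOrder s t) (hS : S.IsNearPolygon 3) (hfin : S.pts.Finite) :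
    0 < t := by
  obtain ⟨x, hx, y, -, hxy⟩ := hS.2.2.1
  have hΓ₂ : 0 < #(sphere hfin x 2) := by
    obtain ⟨z, hzy, hz⟩ :=
      SimpleGraph.exists_adj_dist_eq_of_dist_eq_add_one (show S.dist x y = 2 + 1 from hxy)
    exact card_pos.2 ⟨z, mem_sphere.2 ⟨mem_pts_of_adj_s15 hzy.symm, hz⟩⟩
  refine Nat.pos_of_ne_zero fun ht => ?_
  have := hS.card_sphere_two_le hfin hord hx
  rw [ht, mul_zero, zero_mul] at this
  omega

end Counting

end Geom

theorem statement_15 {P : Type*} (S : Geom P) (s t : ℕ)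
    (hS : S.IsNearPolygon 3) (hfin : S.pts.Finite)
    (hord : S.HasOrder s t) :
    S.pts.ncard ≤ (s + 1) * (s ^ 2 * t ^ 2 + s * t + 1) ∧
    (S.pts.ncard = (s + 1) * (s ^ 2 * t ^ 2 + s * t + 1) ↔ S.IsGenHexagon) := by
  have hN : (s + 1) * (s ^ 2 * t ^ 2 + s * t + 1) + s ^ 3 * t =
      1 + s + s * t + (s + 1) * (s ^ 2 * t * (t + 1)) := by
    ring
  have heq_iff : ∀ x ∈ S.pts, S.pts.ncard = (s + 1) * (s ^ 2 * t ^ 2 + s * t + 1) ↔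
      ∀ y ∈ S.pts, S.dist x y = 2 → ∃! z, S.graph.Adj x z ∧ S.graph.Adj z y := by
    intro x hx
    rw [← hS.card_sphere_two_eq_iff hfin hord hx, ← Nat.add_right_cancel_iff,
      hS.ncard_pts_add hfin hord hx, hN, Nat.add_left_cancel_iff,
      Nat.mul_left_cancel_iff (Nat.succ_pos s)]
  obtain ⟨x, hx, -⟩ := hS.2.2.1
  refine ⟨?_, fun heq => ⟨hS, fun z hz => hord.exists_two_lines (hord.pos_t hS hfin) hz,
    fun y hy => (heq_iff y hy).1 heq⟩, fun hG => (heq_iff x hx).2 (hG.2.2 x hx)⟩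
  refine Nat.le_of_add_le_add_right (b := s ^ 3 * t) ?_
  rw [hS.ncard_pts_add hfin hord hx, hN]
  gcongr
  exact hS.card_sphere_two_le hfin hord hx
end

section
/- Let N be a near hexagon in which every line is incident with exactly three points, containing an isometrically embedded full subgeometry H that is a generalized hexagon of order 2. Then every point of N lies at distance at most 2 from the point set of H; moreover, for every point x of N at distance exactly 2 from the point set of H, the set of points of H at distance 2 from x is an ovoid of H. -/
variable {P : Type*}

namespace Geom

variable {G : Geom P}

theorem setDist_le_dist {X : Set P} (x : P) {z : P} (hz : z ∈ X) :
    G.setDist x X ≤ G.dist x z :=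
  Nat.sInf_le ⟨z, hz, rfl⟩

theorem exists_ne_of_mem_lines {L : Set P} (hL : L ∈ G.lines) (y : P) : ∃ z ∈ L, z ≠ y := by
  obtain ⟨u, hu, v, hv, huv⟩ := G.two_pts L hL
  by_cases huy : u = y
  · exact ⟨v, hv, fun hvy => huv (huy.trans hvy.symm)⟩
  · exact ⟨u, hu, huy⟩

namespace IsNearPolygon

variable {d : ℕ} {x : P} {L : Set P}

theorem exists_nearest_lt (hG : G.IsNearPolygon d) (hx : x ∈ G.pts) (hL : L ∈ G.lines) :
    ∃ y ∈ L, G.dist x y < d ∧ ∀ z ∈ L, z ≠ y → G.dist x y < G.dist x z := by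
  obtain ⟨y, ⟨hyL, hymin⟩, hyuniq⟩ := hG.2.2.2 x hx L hL
  have hstrict : ∀ z ∈ L, z ≠ y → G.dist x y < G.dist x z := by
    intro z hzL hzy
    by_contra! hle
    exact hzy (hyuniq z ⟨hzL, fun w hw => hle.trans (hymin w hw)⟩)
  obtain ⟨z, hzL, hzy⟩ := G.exists_ne_of_mem_lines hL y
  have hzd : G.dist x z ≤ d := hG.2.1 x hx z (G.lines_pts L hL hzL)
  exact ⟨y, hyL, (hstrict z hzL hzy).trans_le hzd, hstrict⟩

theorem existsUnique_dist_eq (hG : G.IsNearPolygon d) (hx : x ∈ G.pts) (hL : L ∈ G.lines)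
    {m : ℕ} (hm : ∀ z ∈ L, m ≤ G.dist x z) (hmd : m + 1 = d) :
    ∃! y, y ∈ L ∧ G.dist x y = m := by
  obtain ⟨y, hyL, hyd, hstrict⟩ := hG.exists_nearest_lt hx hL
  have hym : G.dist x y = m := by have := hm y hyL; omega
  refine ⟨y, ⟨hyL, hym⟩, fun z ⟨hzL, hzm⟩ => ?_⟩
  by_contra hzy
  have := hstrict z hzL hzy
  omega

end IsNearPolygon

end Geom

theorem statement_17_general {P : Type*} (N H : Geom P)
    (hN : N.IsNearPolygon 3)
    (hsub : H.IsSubgeom N)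
    (hH : H.IsGenHexagon) :
    (∀ x ∈ N.pts, N.setDist x H.pts ≤ 2) ∧
    (∀ x ∈ N.pts, N.setDist x H.pts = 2 →
      H.IsOvoid {y | y ∈ H.pts ∧ N.dist x y = 2}) := by
  refine ⟨fun x hx => ?_, fun x hx hd => ⟨fun y hy => hy.1, fun L hL => ?_⟩⟩
  · obtain ⟨p, hp, -⟩ := hH.1.2.2.1
    obtain ⟨L, hL, -⟩ := hH.2.1 p hp
    obtain ⟨y, hyL, hy3, -⟩ := hN.exists_nearest_lt hx (hsub.2 hL)
    have := N.setDist_le_dist x (H.lines_pts L hL hyL)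
    omega
  · have hge : ∀ z ∈ L, 2 ≤ N.dist x z := fun z hz =>
      hd ▸ N.setDist_le_dist x (H.lines_pts L hL hz)
    obtain ⟨y, ⟨hyL, hy⟩, huniq⟩ := hN.existsUnique_dist_eq hx (hsub.2 hL) hge rfl
    exact ⟨y, ⟨hyL, H.lines_pts L hL hyL, hy⟩, fun z hz => huniq z ⟨hz.1, hz.2.2⟩⟩

theorem statement_17 {P : Type*} (N H : Geom P)
    (hN : N.IsNearPolygon 3)
    (h3 : ∀ L ∈ N.lines, L.ncard = 3)
    (hsub : H.IsSubgeom N) (hiso : H.IsIsometric N)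
    (hH : H.IsGenHexagon) (hord : H.HasOrder 2 2) :
    (∀ x ∈ N.pts, N.setDist x H.pts ≤ 2) ∧
    (∀ x ∈ N.pts, N.setDist x H.pts = 2 →
      H.IsOvoid {y | y ∈ H.pts ∧ N.dist x y = 2}) :=
  statement_17_general N H hN hsub hH
end
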